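/- (Expected UCB equals the Kriging Believer) Let α_UCB(x | D) = μ(x|D) + √β · σ(x|D) be the GP Upper Confidence Bound with fixed β ≥ 0. Let y_b be random outputs at busy locations B distributed according to the GP posterior predictive p(y_b | D_n), which has mean μ_b. Then E[α_UCB(x | D_n ∪ (B, y_b)) | D_n, B] = α_UCB(x | D_n ∪ (B, μ_b)), i.e., marginalizing the UCB over the unobserved outputs equals plugging in their posterior means. -/

import Mathlib

open Matrix MeasureTheory

noncomputable def kerMat {E : Type*} (k : E → E → ℝ) {n : ℕ} (X : Fin n → E) :
    Matrix (Fin n) (Fin n) ℝ := Matrix.of fun i j => k (X i) (X j)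

noncomputable def postMean {E : Type*} (k : E → E → ℝ) (η : ℝ) {n : ℕ}
    (X : Fin n → E) (y : Fin n → ℝ) (x : E) : ℝ :=
  (fun i => k x (X i)) ⬝ᵥ
    ((kerMat k X + η ^ 2 • (1 : Matrix (Fin n) (Fin n) ℝ))⁻¹ *ᵥ y)

noncomputable def postVar {E : Type*} (k : E → E → ℝ) (η : ℝ) {n : ℕ}
    (X : Fin n → E) (_y : Fin n → ℝ) (x : E) : ℝ :=
  k x x -
    (fun i => k x (X i)) ⬝ᵥ
      ((kerMat k X + η ^ 2 • (1 : Matrix (Fin n) (Fin n) ℝ))⁻¹ *ᵥ fun i => k (X i) x)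

/-- GP Upper Confidence Bound `α_UCB(x | D) = μ(x|D) + √β σ(x|D)`. -/
noncomputable def ucb {E : Type*} (k : E → E → ℝ) (η β : ℝ) {n : ℕ}
    (X : Fin n → E) (y : Fin n → ℝ) (x : E) : ℝ :=
  postMean k η X y x + Real.sqrt β * Real.sqrt (postVar k η X y x)

/-- Expected UCB equals the Kriging Believer: if the unobserved outputs
`y_b` at busy locations `B` are distributed according to a probability law `ν`
(the GP posterior predictive), whose coordinate means are the posterior means
`μ_b i = μ(B i | D_n)`, then the expectation of the UCB over `y_b` equals the UCB
obtained by plugging in the posterior means `μ_b`. -/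
theorem expected_ucb_eq_kriging_believer {E : Type*} (k : E → E → ℝ) (η β : ℝ)
    (hη : 0 < η) (hβ : 0 ≤ β) {n m : ℕ} (X : Fin n → E) (y : Fin n → ℝ)
    (B : Fin m → E) (x : E)
    (ν : Measure (Fin m → ℝ)) [IsProbabilityMeasure ν]
    (hint : ∀ i, Integrable (fun z => z i) ν)
    (hmean : ∀ i, (∫ z, z i ∂ν) = postMean k η X y (B i)) :
    (∫ z, ucb k η β (Fin.append X B) (Fin.append y z) x ∂ν) =
      ucb k η β (Fin.append X B)
        (Fin.append y fun i => postMean k η X y (B i)) x := by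

  classical
  set X' := Fin.append X B with hX'
  set e : Fin (n + m) → ℝ :=
    (fun i => k x (X' i)) ᵥ*
      (kerMat k X' + η ^ 2 • (1 : Matrix (Fin (n + m)) (Fin (n + m)) ℝ))⁻¹ with he
  have key : ∀ w : Fin m → ℝ,
      ucb k η β X' (Fin.append y w) x
        = (Real.sqrt β * Real.sqrt (postVar k η X' (Fin.append y 0) x)
            + ∑ i : Fin n, e (Fin.castAdd m i) * y i)
          + ∑ i : Fin m, e (Fin.natAdd n i) * w i := by
    intro w
    have hvar : postVar k η X' (Fin.append y w) x
        = postVar k η X' (Fin.append y 0) x := rfl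
    have hmean' : postMean k η X' (Fin.append y w) x
        = ∑ i : Fin n, e (Fin.castAdd m i) * y i
          + ∑ i : Fin m, e (Fin.natAdd n i) * w i := by
      rw [postMean, Matrix.dotProduct_mulVec, ← he, dotProduct, Fin.sum_univ_add]
      simp [Fin.append_left, Fin.append_right]
    rw [ucb, hvar, hmean']
    ring
  simp only [key]
  rw [integral_add (integrable_const _)
    (integrable_finset_sum _ fun i _ => (hint i).const_mul _)]
  rw [integral_const, probReal_univ, smul_eq_mul, one_mul]
  congr 1
  rw [integral_finset_sum _ fun i _ => (hint i).const_mul _]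
  exact Finset.sum_congr rfl fun i _ => by rw [integral_const_mul, hmean i]
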